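/- arXiv:1801.02590 — 3 statements merged into one kernel-verified Lean document; each statement's English description precedes it below -/
import Mathlib

section
/- For m, a, r, K > 0 with b > 1/K and b > -2√a, the cubic polynomial F(x) = (r/m)·(1 - x/K)·(a·x² + b·x + 1) has exactly one critical point in the open interval (0, K), and F is strictly increasing to the left of it and strictly decreasing to the right of it on (0,K). -/
open Real Set

theorem hollingIV_one_hump (r K m a b : ℝ) (hr : 0 < r) (hK : 0 < K)
    (hm : 0 < m) (ha : 0 < a) (hb1 : 1 / K < b) (hb2 : -2 * Real.sqrt a < b) :
    ∃ x₀ ∈ Set.Ioo (0 : ℝ) K,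
      deriv (fun x : ℝ => r / m * (1 - x / K) * (a * x ^ 2 + b * x + 1)) x₀ = 0 ∧
      (∀ x ∈ Set.Ioo (0 : ℝ) K,
        deriv (fun x : ℝ => r / m * (1 - x / K) * (a * x ^ 2 + b * x + 1)) x = 0 → x = x₀) ∧
      StrictMonoOn (fun x : ℝ => r / m * (1 - x / K) * (a * x ^ 2 + b * x + 1))
        (Set.Ioo 0 x₀) ∧
      StrictAntiOn (fun x : ℝ => r / m * (1 - x / K) * (a * x ^ 2 + b * x + 1))
        (Set.Ioo x₀ K) := by
  have hK0 : K ≠ 0 := ne_of_gt hK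
  have hc : 0 < r / m := div_pos hr hm
  set c := r / m with hcdef
  set A : ℝ := -(3 * a / K) with hA
  set B : ℝ := 2 * (a - b / K) with hB
  set C : ℝ := b - 1 / K with hC
  set q : ℝ → ℝ := fun x => A * x ^ 2 + B * x + C with hq
  set F : ℝ → ℝ := fun x : ℝ => r / m * (1 - x / K) * (a * x ^ 2 + b * x + 1) with hF
  have hFderiv : ∀ x : ℝ, HasDerivAt F (c * q x) x := by
    intro x
    have h1 : HasDerivAt (fun x : ℝ => 1 - x / K) (-(1 / K)) x := by
      simpa using ((hasDerivAt_id x).div_const K).const_sub 1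
    have h1' : HasDerivAt (fun x : ℝ => c * (1 - x / K)) (c * -(1 / K)) x :=
      h1.const_mul c
    have h2 : HasDerivAt (fun x : ℝ => a * x ^ 2 + b * x + 1) (a * (2 * x) + b) x := by
      have := (((hasDerivAt_pow 2 x).const_mul a).fun_add ((hasDerivAt_id x).const_mul b)).add_const 1
      exact this.congr_deriv (by push_cast; ring)
    have := h1'.fun_mul h2
    have heq : F = fun x => c * (1 - x / K) * (a * x ^ 2 + b * x + 1) := rfl
    rw [heq]
    refine this.congr_deriv ?_
    simp only [hq, hA, hB, hC]
    field_simp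
    ring
  have hderiv : ∀ x : ℝ, deriv F x = c * q x := fun x => (hFderiv x).deriv
  have hA0 : A < 0 := by
    have : 0 < 3 * a / K := by positivity
    rw [hA]; linarith
  have hC0 : 0 < C := by
    rw [hC]; linarith
  have hq0 : 0 < q 0 := by simpa [hq] using hC0
  have hqK : q K < 0 := by
    have hs : Real.sqrt a ^ 2 = a := Real.sq_sqrt ha.le
    have hs0 : 0 ≤ Real.sqrt a := Real.sqrt_nonneg a
    have hK2 : a * K + b + 1 / K > 0 := by
      have h1 : 0 ≤ (Real.sqrt a * K - 1) ^ 2 / K := by positivity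
      have h2 : (Real.sqrt a * K - 1) ^ 2 / K = a * K + 1 / K - 2 * Real.sqrt a := by
        field_simp
        linear_combination K ^ 2 * hs
      nlinarith
    have : q K = -(a * K + b + 1 / K) := by
      simp only [hq, hA, hB, hC]
      field_simp
      ring
    rw [this]
    linarith
  -- IVT for existence of root
  have hqcont : Continuous q := by fun_prop
  have hmem : (0 : ℝ) ∈ Set.Ioo (q K) (q 0) := ⟨hqK, hq0⟩
  have hivt := intermediate_value_Ioo' (le_of_lt hK) hqcont.continuousOn hmem
  obtain ⟨x₀, hx₀mem, hx₀⟩ := hivt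
  have hx₀1 : 0 < x₀ := hx₀mem.1
  have hx₀2 : x₀ < K := hx₀mem.2
  have key : ∀ x : ℝ, x₀ * q x = (x₀ - x) * (C - A * x * x₀) := by
    intro x
    have : x₀ * q x = (x₀ - x) * (C - A * x * x₀) + x * q x₀ := by
      simp only [hq]; ring
    rw [this, hx₀]; ring
  have hqpos : ∀ x ∈ Set.Ioo (0 : ℝ) x₀, 0 < q x := by
    intro x ⟨hx1, hx2⟩
    have hk := key x
    have hfac : 0 < C - A * x * x₀ := by nlinarith [mul_pos hx1 hx₀1]
    have h3 : 0 < x₀ * q x := by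
      rw [hk]; exact mul_pos (by linarith) hfac
    by_contra h
    push_neg at h
    nlinarith [h3]
  have hqneg : ∀ x ∈ Set.Ioo x₀ K, q x < 0 := by
    intro x ⟨hx1, hx2⟩
    have hk := key x
    have hx0 : 0 < x := lt_trans hx₀1 hx1
    have hfac : 0 < C - A * x * x₀ := by nlinarith [mul_pos hx0 hx₀1]
    have h3 : x₀ * q x < 0 := by
      rw [hk]; exact mul_neg_of_neg_of_pos (by linarith) hfac
    by_contra h
    push_neg at h
    nlinarith [h3]
  have hFcont : Continuous F := by
    rw [hF]; fun_prop
  refine ⟨x₀, hx₀mem, ?_, ?_, ?_, ?_⟩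
  · rw [hderiv, hx₀, mul_zero]
  · intro x hx hdx
    rw [hderiv] at hdx
    have hqx : q x = 0 := by
      rcases mul_eq_zero.mp hdx with h | h
      · exact absurd h (ne_of_gt hc)
      · exact h
    have hk := key x
    rw [hqx, mul_zero] at hk
    have hfac : 0 < C - A * x * x₀ := by nlinarith [mul_pos hx.1 hx₀1]
    have : x₀ - x = 0 := by
      by_contra h
      exact (mul_ne_zero h (ne_of_gt hfac)) hk.symm
    linarith
  · apply strictMonoOn_of_deriv_pos (convex_Ioo _ _) hFcont.continuousOn
    intro x hx
    rw [interior_Ioo] at hx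
    rw [hderiv]
    exact mul_pos hc (hqpos x hx)
  · apply strictAntiOn_of_deriv_neg (convex_Ioo _ _) hFcont.continuousOn
    intro x hx
    rw [interior_Ioo] at hx
    rw [hderiv]
    exact mul_neg_of_pos_of_neg hc (hqneg x hx)
end

section
/- For x > 0, the function g(x) = 1/log(1+x) satisfies 2·g'(x) - x·g''(x) < 0. -/
/-! With `L = log (1 + x)` one finds `g' = -1 / ((1 + x) L²)` and `g'' = (L + 2) / ((1 + x)² L³)`.
For `x > 0` we have `L > 0`, so `g' < 0 < g''` and hence `2 g' - x g'' < 0`. -/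

open Real Filter Topology

section InvLogOneAdd

variable {x : ℝ}

lemma hasDerivAt_log_one_add (hx : 1 + x ≠ 0) :
    HasDerivAt (fun z : ℝ => log (1 + z)) (1 + x)⁻¹ x := by
  simpa [one_div] using ((hasDerivAt_id x).const_add 1).log hx

lemma hasDerivAt_inv_log_one_add (hL : log (1 + x) ≠ 0) :
    HasDerivAt (fun z : ℝ => 1 / log (1 + z)) (-((1 + x) * log (1 + x) ^ 2)⁻¹) x := by
  simp only [one_div]
  have h := (hasDerivAt_log_one_add ((log_ne_zero.mp hL).1)).fun_inv hL
  rwa [neg_div, div_eq_mul_inv, ← mul_inv] at h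

lemma deriv_inv_log_one_add_eventuallyEq (hL : log (1 + x) ≠ 0) :
    deriv (fun z : ℝ => 1 / log (1 + z)) =ᶠ[𝓝 x]
      fun z => -((1 + z) * log (1 + z) ^ 2)⁻¹ := by
  have hcont := (hasDerivAt_log_one_add ((log_ne_zero.mp hL).1)).continuousAt
  filter_upwards [hcont.eventually_ne hL] with y hy
  exact (hasDerivAt_inv_log_one_add hy).deriv

lemma iteratedDeriv_two_inv_log_one_add (hL : log (1 + x) ≠ 0) :
    iteratedDeriv 2 (fun z : ℝ => 1 / log (1 + z)) x =
      (log (1 + x) + 2) / ((1 + x) ^ 2 * log (1 + x) ^ 3) := by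
  have hx := (log_ne_zero.mp hL).1
  have hlog := hasDerivAt_log_one_add hx
  have hprod : HasDerivAt (fun z : ℝ => (1 + z) * log (1 + z) ^ 2)
      (1 * log (1 + x) ^ 2 + (1 + x) * (2 * log (1 + x) * (1 + x)⁻¹)) x := by
    simpa using ((hasDerivAt_id x).const_add 1).fun_mul (hlog.fun_pow 2)
  rw [iteratedDeriv_succ, iteratedDeriv_one,
    (deriv_inv_log_one_add_eventuallyEq hL).deriv_eq, (hprod.fun_inv (by positivity)).fun_neg.deriv]
  field_simp

end InvLogOneAdd

theorem q2_neg (x : ℝ) (hx : 0 < x) :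
    2 * deriv (fun z : ℝ => 1 / Real.log (1 + z)) x -
      x * iteratedDeriv 2 (fun z : ℝ => 1 / Real.log (1 + z)) x < 0 := by
  have h1x : 0 < 1 + x := by linarith
  have hL : 0 < log (1 + x) := log_pos (by linarith)
  have hg' : deriv (fun z : ℝ => 1 / log (1 + z)) x < 0 := by
    rw [(hasDerivAt_inv_log_one_add hL.ne').deriv, neg_lt_zero]
    positivity
  have hg'' : 0 < iteratedDeriv 2 (fun z : ℝ => 1 / log (1 + z)) x := by
    rw [iteratedDeriv_two_inv_log_one_add hL.ne']
    positivity
  linarith [mul_pos hx hg'']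
end

section
/- For any K > 0, the function F(x) = x·(K - x)/log(1 + x) is strictly concave on (0, K), i.e., F''(x) < 0 for all x ∈ (0, K). -/
open Real Set

private lemma aux_div_lt_log {x : ℝ} (hx : 0 < x) : x / (1 + x) < Real.log (1 + x) := by
  have h1 : (0:ℝ) < 1 + x := by linarith
  have hne : ((1+x)⁻¹ : ℝ) ≠ 1 := by
    have : (1+x)⁻¹ < 1 := by
      rw [inv_lt_one_iff₀]; right; linarith
    linarith
  have h := Real.log_lt_sub_one_of_pos (x := (1+x)⁻¹) (by positivity) hne
  rw [Real.log_inv] at h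
  have h2 : (1+x)⁻¹ - 1 = -(x/(1+x)) := by field_simp; ring
  linarith

private lemma aux_phi_deriv {y : ℝ} (hy : -1 < y) :
    HasDerivAt (fun z : ℝ => Real.log (1+z) - 2*z/(2+z)) ((1+y)⁻¹ - 4/(2+y)^2) y := by
  have h1 : (0:ℝ) < 1 + y := by linarith
  have h2 : (0:ℝ) < 2 + y := by linarith
  have hlog : HasDerivAt (fun z : ℝ => Real.log (1+z)) ((1+y)⁻¹) y := by
    have := ((hasDerivAt_id y).const_add 1).log (ne_of_gt h1)
    simpa [one_div] using this
  have hfrac : HasDerivAt (fun z : ℝ => 2*z/(2+z)) (4/(2+y)^2) y := by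
    have hnum : HasDerivAt (fun z : ℝ => 2*z) 2 y := by
      simpa using (hasDerivAt_id y).const_mul 2
    have hden : HasDerivAt (fun z : ℝ => 2+z) 1 y := (hasDerivAt_id y).const_add 2
    have := hnum.div hden (ne_of_gt h2)
    refine this.congr_deriv ?_
    field_simp
    ring
  exact hlog.sub hfrac

private lemma aux_two_div_lt_log {x : ℝ} (hx : 0 < x) : 2*x/(2+x) < Real.log (1 + x) := by
  have key : StrictMonoOn (fun z : ℝ => Real.log (1+z) - 2*z/(2+z)) (Ici 0) := by
    apply strictMonoOn_of_deriv_pos (convex_Ici 0)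
    · intro y hy
      have hy' : (-1:ℝ) < y := by simp at hy; linarith
      exact (aux_phi_deriv hy').continuousAt.continuousWithinAt
    · intro y hy
      rw [interior_Ici] at hy
      have hy' : (-1:ℝ) < y := by linarith [mem_Ioi.mp hy]
      rw [(aux_phi_deriv hy').deriv]
      have h1 : (0:ℝ) < 1 + y := by linarith
      have h2 : (0:ℝ) < 2 + y := by linarith
      have hy0 : 0 < y := mem_Ioi.mp hy
      have : (1+y)⁻¹ - 4/(2+y)^2 = y^2/((1+y)*(2+y)^2) := by
        field_simp
        ring
      rw [this]
      positivity
  have h := key (self_mem_Ici) (mem_Ici.mpr (le_of_lt hx)) hx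
  simp only [Real.log_one] at h
  norm_num at h
  linarith

theorem log_isocline_concave (K : ℝ) (hK : 0 < K) :
    ∀ x ∈ Set.Ioo (0 : ℝ) K,
      iteratedDeriv 2 (fun z : ℝ => z * (K - z) / Real.log (1 + z)) x < 0 := by
  intro x hx
  obtain ⟨hx0, hxK⟩ := hx
  set F : ℝ → ℝ := fun z : ℝ => z * (K - z) / Real.log (1 + z) with hF
  set F1 : ℝ → ℝ := fun y : ℝ =>
    ((K - 2*y) * Real.log (1+y) - y*(K-y) * (1+y)⁻¹) / (Real.log (1+y))^2 with hF1def
  -- basic facts at a point y > 0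
  have hlogat : ∀ y : ℝ, 0 < y → HasDerivAt (fun z : ℝ => Real.log (1+z)) ((1+y)⁻¹) y := by
    intro y hy
    have h1 : (0:ℝ) < 1 + y := by linarith
    have := ((hasDerivAt_id y).const_add 1).log (ne_of_gt h1)
    simpa [one_div] using this
  have hLpos : ∀ y : ℝ, 0 < y → 0 < Real.log (1+y) := by
    intro y hy; exact Real.log_pos (by linarith)
  have hnumat : ∀ y : ℝ, HasDerivAt (fun z : ℝ => z*(K-z)) (K - 2*y) y := by
    intro y
    have := (hasDerivAt_id y).mul ((hasDerivAt_id y).const_sub K)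
    refine this.congr_deriv ?_
    simp; ring
  have hinvat : ∀ y : ℝ, 0 < y → HasDerivAt (fun z : ℝ => (1+z)⁻¹) (-(1/(1+y)^2)) y := by
    intro y hy
    have h1 : (0:ℝ) < 1 + y := by linarith
    have h := ((hasDerivAt_id y).const_add 1).inv (ne_of_gt h1)
    simp only [id_eq] at h
    refine h.congr_deriv ?_
    ring
  -- first derivative
  have hF' : ∀ y : ℝ, 0 < y → HasDerivAt F (F1 y) y := by
    intro y hy
    have hL := hLpos y hy
    have := (hnumat y).div (hlogat y hy) (ne_of_gt hL)
    exact this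
  -- reduce iteratedDeriv
  rw [iteratedDeriv_succ, iteratedDeriv_one]
  have hev : deriv F =ᶠ[nhds x] F1 := by
    filter_upwards [Ioi_mem_nhds hx0] with y hy
    exact (hF' y (mem_Ioi.mp hy)).deriv
  rw [hev.deriv_eq]
  -- second derivative
  set u : ℝ := 1 + x with hu_def
  set L : ℝ := Real.log (1+x) with hL_def
  have hu : 0 < u := by simp [hu_def]; linarith
  have hL : 0 < L := hLpos x hx0
  set D : ℝ := (-2*u*L*(u*L - x) + (K-x)*(2*x - (2+x)*L)) / (u^2 * L^3) with hD_def
  have hF1' : HasDerivAt F1 D x := by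
    have hA : HasDerivAt (fun y : ℝ => (K - 2*y) * Real.log (1+y) - y*(K-y) * (1+y)⁻¹)
        ((-2) * L + (K - 2*x) * u⁻¹ - ((K - 2*x) * u⁻¹ + (x*(K-x)) * (-(1/u^2)))) x := by
      have h1 : HasDerivAt (fun y : ℝ => K - 2*y) (-2) x := by
        simpa using ((hasDerivAt_id x).const_mul 2).const_sub K
      have hp1 := h1.mul (hlogat x hx0)
      have hp2 := (hnumat x).mul (hinvat x hx0)
      exact hp1.sub hp2
    have hden : HasDerivAt (fun y : ℝ => (Real.log (1+y))^2) (2 * L ^ 1 * u⁻¹) x := by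
      refine ((hlogat x hx0).pow 2).congr_deriv ?_
      simp [hL_def, hu_def]
    have hdiv := hA.div hden (by positivity)
    refine hdiv.congr_deriv ?_
    rw [hD_def, ← hL_def, ← hu_def]
    field_simp
    ring
  rw [hF1'.deriv]
  -- D < 0
  have hgap1 : x < u * L := by
    have := aux_div_lt_log hx0
    rw [div_lt_iff₀ (by linarith : (0:ℝ) < 1 + x)] at this
    calc x < Real.log (1+x) * (1+x) := this
      _ = u * L := by rw [hu_def, hL_def]; ring
  have hgap2 : 2*x < (2+x) * L := by
    have := aux_two_div_lt_log hx0
    rw [div_lt_iff₀ (by linarith : (0:ℝ) < 2 + x)] at this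
    calc 2*x < Real.log (1+x) * (2+x) := this
      _ = (2+x) * L := by rw [hL_def]; ring
  have t1 : 0 < 2*u*L*(u*L - x) := by
    apply mul_pos (by positivity)
    linarith
  have t2 : 0 < (K-x)*((2+x)*L - 2*x) := by
    apply mul_pos (by linarith)
    linarith
  rw [hD_def]
  apply div_neg_of_neg_of_pos
  · nlinarith [t1, t2]
  · positivity
end
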